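/- arXiv:2512.11540 — 2 statements merged into one kernel-verified Lean document; each statement's English description precedes it below -/
import Mathlib

section
/- Let k be a field of characteristic zero, A a k-vector space with a bilinear product ∗, and let (B, ⋄) be the perm algebra of the specific example (free k-module on (ℤ×ℤ)×{1,2} with the vector-field-type product). Then the induced product · on A ⊗ B is commutative and associative if and only if (A, ∗) is a Zinbiel algebra. -/
/-!
In a perm algebra a product of three elements depends only on its last factor and on the
unordered pair of the other two: `b₁ ⋄ (b₂ ⋄ b₃) = (b₁ ⋄ b₂) ⋄ b₃ = (b₂ ⋄ b₁) ⋄ b₃`. Expanding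
`(u · v) · w = u · (v · w)` on pure tensors and grouping the terms by these triple products
leaves exactly the Zinbiel identity in `A`; commutativity of `·` holds for any `∗` and `⋄`.

Conversely, the product of `B` on its basis is `x^g ∂_s ⋄ x^h ∂_t = x^(g + h + e_s) ∂_t`. For
`u = a₁ ⊗ ∂₁`, `v = a₂ ⊗ ∂₁`, `w = a₃ ⊗ ∂₂`, the only terms of `(u · v) · w = u · (v · w)` ending
in `∂₂` sit at `x₁² ∂₂`, and their coefficients are `(a₁ ∗ a₂) ∗ a₃ + (a₂ ∗ a₁) ∗ a₃` and
`a₁ ∗ (a₂ ∗ a₃)`.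
-/

open TensorProduct

noncomputable section

def IsZinbiel {k A : Type} [Field k] [AddCommGroup A] [Module k A]
    (ast : A →ₗ[k] A →ₗ[k] A) : Prop :=
  ∀ a₁ a₂ a₃ : A, ast a₁ (ast a₂ a₃) = ast (ast a₁ a₂) a₃ + ast (ast a₂ a₁) a₃

def IsPreLie {k A : Type} [Field k] [AddCommGroup A] [Module k A]
    (circ : A →ₗ[k] A →ₗ[k] A) : Prop :=
  ∀ a₁ a₂ a₃ : A,
    circ (circ a₁ a₂) a₃ - circ a₁ (circ a₂ a₃)
      = circ (circ a₂ a₁) a₃ - circ a₂ (circ a₁ a₃)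

def IsPerm {k B : Type} [Field k] [AddCommGroup B] [Module k B]
    (dia : B →ₗ[k] B →ₗ[k] B) : Prop :=
  ∀ b₁ b₂ b₃ : B,
    dia b₁ (dia b₂ b₃) = dia (dia b₁ b₂) b₃ ∧
    dia (dia b₁ b₂) b₃ = dia (dia b₂ b₁) b₃

def IsPrePoisson {k A : Type} [Field k] [AddCommGroup A] [Module k A]
    (ast circ : A →ₗ[k] A →ₗ[k] A) : Prop :=
  IsZinbiel ast ∧ IsPreLie circ ∧
  (∀ a₁ a₂ a₃ : A,
    ast (circ a₁ a₂ - circ a₂ a₁) a₃ = circ a₁ (ast a₂ a₃) - ast a₂ (circ a₁ a₃)) ∧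
  (∀ a₁ a₂ a₃ : A,
    circ (ast a₁ a₂ + ast a₂ a₁) a₃ = ast a₁ (circ a₂ a₃) + ast a₂ (circ a₁ a₃))

def IsPoisson {k P : Type} [Field k] [AddCommGroup P] [Module k P]
    (mul br : P →ₗ[k] P →ₗ[k] P) : Prop :=
  (∀ u v : P, mul u v = mul v u) ∧
  (∀ u v w : P, mul (mul u v) w = mul u (mul v w)) ∧
  (∀ u v : P, br u v = - br v u) ∧
  (∀ u v w : P, br (br u v) w + br (br v w) u + br (br w u) v = 0) ∧
  (∀ u v w : P, br u (mul v w) = mul (br u v) w + mul v (br u w))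

def idm (k M : Type) [Field k] [AddCommGroup M] [Module k M] : M →ₗ[k] M :=
  LinearMap.id

def tau (k M : Type) [Field k] [AddCommGroup M] [Module k M] :
    M ⊗[k] M →ₗ[k] M ⊗[k] M :=
  (TensorProduct.comm k M M).toLinearMap

def unassoc (k M : Type) [Field k] [AddCommGroup M] [Module k M] :
    M ⊗[k] (M ⊗[k] M) →ₗ[k] (M ⊗[k] M) ⊗[k] M :=
  (TensorProduct.assoc k M M M).symm.toLinearMap

def intch (k A B : Type) [Field k] [AddCommGroup A] [Module k A]
    [AddCommGroup B] [Module k B] :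
    (A ⊗[k] A) ⊗[k] (B ⊗[k] B) →ₗ[k] (A ⊗[k] B) ⊗[k] (A ⊗[k] B) :=
  (TensorProduct.tensorTensorTensorComm k A A B B).toLinearMap

def IsZinbielCo {k A : Type} [Field k] [AddCommGroup A] [Module k A]
    (ϑ : A →ₗ[k] A ⊗[k] A) : Prop :=
  ∀ a : A,
    TensorProduct.map ϑ (idm k A) (ϑ a)
      + TensorProduct.map (tau k A) (idm k A) (TensorProduct.map ϑ (idm k A) (ϑ a))
    = unassoc k A (TensorProduct.map (idm k A) ϑ (ϑ a))

def IsPermCo {k B : Type} [Field k] [AddCommGroup B] [Module k B]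
    (ν : B →ₗ[k] B ⊗[k] B) : Prop :=
  ∀ b : B,
    TensorProduct.map ν (idm k B) (ν b)
      = unassoc k B (TensorProduct.map (idm k B) ν (ν b)) ∧
    TensorProduct.map ν (idm k B) (ν b)
      = TensorProduct.map (tau k B) (idm k B) (TensorProduct.map ν (idm k B) (ν b))

def IsPreLieCo {k A : Type} [Field k] [AddCommGroup A] [Module k A]
    (θ : A →ₗ[k] A ⊗[k] A) : Prop :=
  ∀ a : A,
    unassoc k A (TensorProduct.map (idm k A) θ (θ a))
      - TensorProduct.map (tau k A) (idm k A)
          (unassoc k A (TensorProduct.map (idm k A) θ (θ a)))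
    = TensorProduct.map θ (idm k A) (θ a)
      - TensorProduct.map (tau k A) (idm k A) (TensorProduct.map θ (idm k A) (θ a))

def Zexp {k A : Type} [Field k] [AddCommGroup A] [Module k A]
    (ast : A →ₗ[k] A →ₗ[k] A) {p : ℕ} (x y : Fin p → A) : (A ⊗[k] A) ⊗[k] A :=
  ∑ i : Fin p, ∑ j : Fin p,
    (((ast (x i) (x j)) ⊗ₜ[k] (y j)) ⊗ₜ[k] (y i)
      + ((y j) ⊗ₜ[k] (ast (x i) (x j))) ⊗ₜ[k] (y i)
      + ((x i) ⊗ₜ[k] (x j)) ⊗ₜ[k] (ast (y i) (y j))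
      + ((x j) ⊗ₜ[k] (x i)) ⊗ₜ[k] (ast (y i) (y j))
      - ((x i) ⊗ₜ[k] (ast (y i) (x j))) ⊗ₜ[k] (y j)
      - ((x j) ⊗ₜ[k] (ast (x i) (y j))) ⊗ₜ[k] (y i)
      - ((ast (x i) (y j)) ⊗ₜ[k] (x j)) ⊗ₜ[k] (y i)
      - ((ast (y i) (x j)) ⊗ₜ[k] (x i)) ⊗ₜ[k] (y j))

def PLexp {k A : Type} [Field k] [AddCommGroup A] [Module k A]
    (circ : A →ₗ[k] A →ₗ[k] A) {p : ℕ} (x y : Fin p → A) : (A ⊗[k] A) ⊗[k] A :=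
  ∑ i : Fin p, ∑ j : Fin p,
    (((circ (x i) (x j)) ⊗ₜ[k] (y j)) ⊗ₜ[k] (y i)
      + ((x j) ⊗ₜ[k] (circ (x i) (y j))) ⊗ₜ[k] (y i)
      + ((circ (y i) (x j)) ⊗ₜ[k] (x i)) ⊗ₜ[k] (y j)
      + ((x j) ⊗ₜ[k] (x i)) ⊗ₜ[k] (circ (y i) (y j))
      - ((y j) ⊗ₜ[k] (circ (x i) (x j))) ⊗ₜ[k] (y i)
      - ((x i) ⊗ₜ[k] (circ (y i) (x j))) ⊗ₜ[k] (y j)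
      - ((circ (x i) (y j)) ⊗ₜ[k] (x j)) ⊗ₜ[k] (y i)
      - ((x i) ⊗ₜ[k] (x j)) ⊗ₜ[k] (circ (y i) (y j)))

def AYexp {k P : Type} [Field k] [AddCommGroup P] [Module k P]
    (m : P →ₗ[k] P →ₗ[k] P) {ι : Type} [Fintype ι] (u v : ι → P) :
    (P ⊗[k] P) ⊗[k] P :=
  ∑ α : ι, ∑ β : ι,
    (((m (u α) (u β)) ⊗ₜ[k] (v α)) ⊗ₜ[k] (v β)
      + ((u α) ⊗ₜ[k] (m (v α) (u β))) ⊗ₜ[k] (v β)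
      - ((u β) ⊗ₜ[k] (u α)) ⊗ₜ[k] (m (v α) (v β)))

def CYexp {k P : Type} [Field k] [AddCommGroup P] [Module k P]
    (br : P →ₗ[k] P →ₗ[k] P) {ι : Type} [Fintype ι] (u v : ι → P) :
    (P ⊗[k] P) ⊗[k] P :=
  ∑ α : ι, ∑ β : ι,
    (((br (u α) (u β)) ⊗ₜ[k] (v α)) ⊗ₜ[k] (v β)
      + ((u α) ⊗ₜ[k] (u β)) ⊗ₜ[k] (br (v α) (v β))
      + ((u α) ⊗ₜ[k] (br (v α) (u β))) ⊗ₜ[k] (v β))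

def sharp (k : Type) [Field k] {V : Type} [AddCommGroup V] [Module k V]
    (s : V ⊗[k] V) (ξ : V →ₗ[k] k) : V :=
  TensorProduct.lid k V (LinearMap.rTensor V ξ s)

abbrev PermB (k : Type) [Field k] : Type := ((ℤ × ℤ) × Fin 2) →₀ k

def bB (k : Type) [Field k] (i₁ i₂ : ℤ) (s : Fin 2) : PermB k :=
  Finsupp.single ((i₁, i₂), s) 1

section BilinearExt

variable {R M N : Type*} [CommRing R] [AddCommGroup M] [Module R M] [AddCommGroup N] [Module R N]

theorem TensorProduct.comm_of_tmul {Q : Type*} [AddCommGroup Q] [Module R Q]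
    {m : M ⊗[R] N →ₗ[R] M ⊗[R] N →ₗ[R] Q}
    (h : ∀ a b a' b', m (a ⊗ₜ b) (a' ⊗ₜ b') = m (a' ⊗ₜ b') (a ⊗ₜ b))
    (u v : M ⊗[R] N) : m u v = m v u := by
  have : m = m.flip := ext' fun a b => ext' fun a' b' => h a b a' b'
  exact congr($this u v)

theorem TensorProduct.assoc_of_tmul {m : M ⊗[R] N →ₗ[R] M ⊗[R] N →ₗ[R] M ⊗[R] N}
    (h : ∀ a₁ b₁ a₂ b₂ a₃ b₃,
      m (m (a₁ ⊗ₜ b₁) (a₂ ⊗ₜ b₂)) (a₃ ⊗ₜ b₃) = m (a₁ ⊗ₜ b₁) (m (a₂ ⊗ₜ b₂) (a₃ ⊗ₜ b₃)))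
    (u v w : M ⊗[R] N) : m (m u v) w = m u (m v w) := by
  have : m.compr₂ m = ((LinearMap.llcomp R _ _ _).comp m).compl₂ m :=
    ext' fun a₁ b₁ => ext' fun a₂ b₂ => ext' fun a₃ b₃ => h a₁ b₁ a₂ b₂ a₃ b₃
  exact congr($this u v w)

variable {ι : Type*} (b : Module.Basis ι R M) {d : M →ₗ[R] M →ₗ[R] M}

theorem Module.Basis.assoc_of_basis
    (h : ∀ i j l, d (d (b i) (b j)) (b l) = d (b i) (d (b j) (b l)))
    (x y z : M) : d (d x y) z = d x (d y z) := by
  have : d.compr₂ d = ((LinearMap.llcomp R _ _ _).comp d).compl₂ d :=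
    LinearMap.ext_basis b b fun i j => b.ext fun l => h i j l
  exact congr($this x y z)

theorem Module.Basis.leftComm_of_basis
    (h : ∀ i j l, d (d (b i) (b j)) (b l) = d (d (b j) (b i)) (b l))
    (x y z : M) : d (d x y) z = d (d y x) z := by
  have : d.compr₂ d = (d.compr₂ d).flip :=
    LinearMap.ext_basis b b fun i j => b.ext fun l => h i j l
  exact congr($this x y z)

end BilinearExt

theorem isPerm_of_single_single {k G S : Type} [Field k] [AddCommMonoid G] (w : S → G)
    {dia : ((G × S) →₀ k) →ₗ[k] ((G × S) →₀ k) →ₗ[k] ((G × S) →₀ k)}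
    (hdia : ∀ x y : G × S, dia (Finsupp.single x 1) (Finsupp.single y 1)
      = Finsupp.single (x.1 + y.1 + w x.2, y.2) 1) :
    IsPerm dia := by
  have hb (x : G × S) : Finsupp.basisSingleOne x = Finsupp.single x (1 : k) := rfl
  refine fun b₁ b₂ b₃ => ⟨(Finsupp.basisSingleOne.assoc_of_basis ?_ b₁ b₂ b₃).symm,
    Finsupp.basisSingleOne.leftComm_of_basis ?_ b₁ b₂ b₃⟩ <;>
  · intro x y z
    simp only [hb, hdia]
    congr 2
    abel

section SymmetrizedProduct

variable {k A B : Type} [Field k] [AddCommGroup A] [Module k A] [AddCommGroup B] [Module k B]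
  {ast : A →ₗ[k] A →ₗ[k] A} {dia : B →ₗ[k] B →ₗ[k] B}
  {m : A ⊗[k] B →ₗ[k] A ⊗[k] B →ₗ[k] A ⊗[k] B}

theorem comm_of_symmetrized
    (hm : ∀ (a₁ a₂ : A) (b₁ b₂ : B),
      m (a₁ ⊗ₜ[k] b₁) (a₂ ⊗ₜ[k] b₂) = ast a₁ a₂ ⊗ₜ dia b₁ b₂ + ast a₂ a₁ ⊗ₜ dia b₂ b₁)
    (u v : A ⊗[k] B) : m u v = m v u :=
  TensorProduct.comm_of_tmul (fun a b a' b' => by rw [hm, hm, add_comm]) u v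

theorem assoc_of_symmetrized (hast : IsZinbiel ast) (hdia : IsPerm dia)
    (hm : ∀ (a₁ a₂ : A) (b₁ b₂ : B),
      m (a₁ ⊗ₜ[k] b₁) (a₂ ⊗ₜ[k] b₂) = ast a₁ a₂ ⊗ₜ dia b₁ b₂ + ast a₂ a₁ ⊗ₜ dia b₂ b₁)
    (u v w : A ⊗[k] B) : m (m u v) w = m u (m v w) := by
  refine TensorProduct.assoc_of_tmul (fun a₁ b₁ a₂ b₂ a₃ b₃ => ?_) u v w
  simp only [hm, map_add, LinearMap.add_apply, hast _ _ _, (hdia _ _ _).1, add_tmul]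
  rw [(hdia b₂ b₁ b₃).2, (hdia b₂ b₃ b₁).2, (hdia b₁ b₃ b₂).2]
  abel

end SymmetrizedProduct

theorem isZinbiel_of_symmetrized_assoc {k A G S : Type} [Field k] [AddCommGroup A] [Module k A]
    [AddCommMonoid G] (w : S → G) {s t : S} (hst : s ≠ t) {ast : A →ₗ[k] A →ₗ[k] A}
    {dia : ((G × S) →₀ k) →ₗ[k] ((G × S) →₀ k) →ₗ[k] ((G × S) →₀ k)}
    (hdia : ∀ x y : G × S, dia (Finsupp.single x 1) (Finsupp.single y 1)
      = Finsupp.single (x.1 + y.1 + w x.2, y.2) 1)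
    {m : A ⊗[k] ((G × S) →₀ k) →ₗ[k] A ⊗[k] ((G × S) →₀ k) →ₗ[k] A ⊗[k] ((G × S) →₀ k)}
    (hm : ∀ (a₁ a₂ : A) (b₁ b₂ : (G × S) →₀ k),
      m (a₁ ⊗ₜ[k] b₁) (a₂ ⊗ₜ[k] b₂) = ast a₁ a₂ ⊗ₜ dia b₁ b₂ + ast a₂ a₁ ⊗ₜ dia b₂ b₁)
    (hassoc : ∀ u v w, m (m u v) w = m u (m v w)) :
    IsZinbiel ast := by
  intro a₁ a₂ a₃
  let coeff : A ⊗[k] ((G × S) →₀ k) →ₗ[k] A :=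
    (TensorProduct.rid k A).toLinearMap ∘ₗ (Finsupp.lapply (w s + w s, t)).lTensor A
  have h := congrArg coeff <| hassoc (a₁ ⊗ₜ Finsupp.single (0, s) 1)
    (a₂ ⊗ₜ Finsupp.single (0, s) 1) (a₃ ⊗ₜ Finsupp.single (0, t) 1)
  simpa [coeff, hm, hdia, hst.symm] using h.symm

theorem statement2_general (k A : Type) [Field k]
    [AddCommGroup A] [Module k A]
    (ast : A →ₗ[k] A →ₗ[k] A)
    (dia : PermB k →ₗ[k] PermB k →ₗ[k] PermB k)
    (hdia : ∀ (i₁ i₂ j₁ j₂ : ℤ) (s t : Fin 2),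
      dia (bB k i₁ i₂ s) (bB k j₁ j₂ t)
        = if s = 0 then bB k (i₁ + j₁ + 1) (i₂ + j₂) t
          else bB k (i₁ + j₁) (i₂ + j₂ + 1) t)
    (m : A ⊗[k] PermB k →ₗ[k] A ⊗[k] PermB k →ₗ[k] A ⊗[k] PermB k)
    (hm : ∀ (a₁ a₂ : A) (b₁ b₂ : PermB k),
      m (a₁ ⊗ₜ[k] b₁) (a₂ ⊗ₜ[k] b₂)
        = (ast a₁ a₂) ⊗ₜ[k] (dia b₁ b₂) + (ast a₂ a₁) ⊗ₜ[k] (dia b₂ b₁))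
    :
    ((∀ u v : A ⊗[k] PermB k, m u v = m v u) ∧
    (∀ u v w : A ⊗[k] PermB k, m (m u v) w = m u (m v w)))
      ↔ IsZinbiel ast := by
  have hdia' : ∀ x y : (ℤ × ℤ) × Fin 2, dia (Finsupp.single x 1) (Finsupp.single y 1)
      = Finsupp.single (x.1 + y.1 + ![(1, 0), (0, 1)] x.2, y.2) 1 := by
    rintro ⟨⟨i₁, i₂⟩, s⟩ ⟨⟨j₁, j₂⟩, t⟩
    have := hdia i₁ i₂ j₁ j₂ s t
    fin_cases s <;> simpa [bB] using this
  exact ⟨fun ⟨_, hassoc⟩ => isZinbiel_of_symmetrized_assoc _ Fin.zero_ne_one hdia' hm hassoc,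
    fun hast => ⟨comm_of_symmetrized hm,
      assoc_of_symmetrized hast (isPerm_of_single_single _ hdia') hm⟩⟩

theorem statement2 (k A : Type) [Field k] [CharZero k]
    [AddCommGroup A] [Module k A]
    (ast : A →ₗ[k] A →ₗ[k] A)
    (dia : PermB k →ₗ[k] PermB k →ₗ[k] PermB k)
    (hdia : ∀ (i₁ i₂ j₁ j₂ : ℤ) (s t : Fin 2),
      dia (bB k i₁ i₂ s) (bB k j₁ j₂ t)
        = if s = 0 then bB k (i₁ + j₁ + 1) (i₂ + j₂) t
          else bB k (i₁ + j₁) (i₂ + j₂ + 1) t)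
    (m : A ⊗[k] PermB k →ₗ[k] A ⊗[k] PermB k →ₗ[k] A ⊗[k] PermB k)
    (hm : ∀ (a₁ a₂ : A) (b₁ b₂ : PermB k),
      m (a₁ ⊗ₜ[k] b₁) (a₂ ⊗ₜ[k] b₂)
        = (ast a₁ a₂) ⊗ₜ[k] (dia b₁ b₂) + (ast a₂ a₁) ⊗ₜ[k] (dia b₂ b₁))
    :
    ((∀ u v : A ⊗[k] PermB k, m u v = m v u) ∧
    (∀ u v w : A ⊗[k] PermB k, m (m u v) w = m u (m v w)))
      ↔ IsZinbiel ast :=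
  statement2_general k A ast dia hdia m hm
end
end

section
/- Let k be a field of characteristic zero, (A, ∗) a finite-dimensional Zinbiel algebra and r ∈ A ⊗ A a symmetric solution of the Zinbiel Yang–Baxter equation, so that ϑ_r(a) = (id ⊗ (L+R)(a) − L(a) ⊗ id)(r) makes (A, ∗, ϑ_r) a triangular Zinbiel bialgebra. Let (B, ⋄, ω) be a quadratic perm algebra with basis {eⱼ} and dual basis {fⱼ}, write r̂ = Σᵢ Σⱼ (xᵢ ⊗ eⱼ) ⊗ (yᵢ ⊗ fⱼ) for r = Σᵢ xᵢ ⊗ yᵢ, and let Δ(a ⊗ b) = (id ⊗ id + τ)(ϑ_r(a) • ν_ω(b)) be the coproduct of the induced infinitesimal bialgebra on (A ⊗ B, ·). Then Δ(a ⊗ b) = (id ⊗ L(a ⊗ b) − L(a ⊗ b) ⊗ id)(r̂) for all a ∈ A, b ∈ B, where L(u) denotes multiplication by u in (A ⊗ B, ·); in particular the induced infinitesimal bialgebra equals the triangular infinitesimal bialgebra associated to the skew-symmetric AYBE solution r̂. -/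
open TensorProduct

noncomputable section

/-! Put `c = ∑ⱼ eⱼ ⊗ fⱼ`. Then `r̂` is the interchange of `r ⊗ c`, and left multiplication by
`a ⊗ b` on `A ⊗ B` is `L(a) ⊗ L(b) + R(a) ⊗ R(b)`, so both sides are interchanges of elements of
`(A ⊗ A) ⊗ (B ⊗ B)`. Invariance of `ω` makes `L(b)` self-adjoint and `L(b) − R(b)` the adjoint of
`R(b)`, and an operator moves across `c` to its adjoint: `(T ⊗ id) c = (id ⊗ Q) c` whenever
`ω(Q u, v) = ω(u, T v)`. With `τ c = −c`, `ν(b) = (id ⊗ R(b)) c` and `τ r = r`, both sides become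
the same combination of `(id ⊗ L(a)) r, (id ⊗ R(a)) r, (L(a) ⊗ id) r, (R(a) ⊗ id) r` tensored with
`(id ⊗ L(b)) c, (id ⊗ R(b)) c`. Identities in `B ⊗ B` are checked by pairing with `ω̂`, which is
nondegenerate since `e` and `f` are dual bases. -/

section DualBasis

variable {k B : Type} [Field k] [AddCommGroup B] [Module k B]
  {ω : B →ₗ[k] B →ₗ[k] k} {n : ℕ} {e : Module.Basis (Fin n) k B} {f : Fin n → B}

variable (e f) in
def dualTensor : B ⊗[k] B := ∑ j, e j ⊗ₜ[k] f j

theorem tmul_omega_tmul (u₁ u₂ v₁ v₂ : B) :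
    LinearMap.BilinForm.tmul ω ω (u₁ ⊗ₜ u₂) (v₁ ⊗ₜ v₂) = ω u₁ v₁ * ω u₂ v₂ := by
  simp [mul_comm]

variable (hdual : ∀ i j : Fin n, ω (f i) (e j) = if i = j then 1 else 0)
include hdual

theorem sum_omega_smul (v : B) : ∑ j, ω (f j) v • e j = v := by
  have hcoord : ∀ j, ω (f j) = e.coord j := fun j =>
    e.ext fun i => by simp [hdual, Finsupp.single_apply, eq_comm]
  simp only [hcoord, Module.Basis.coord_apply, e.sum_repr]

theorem sum_omega_mul_omega (g : B →ₗ[k] B) (u w : B) :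
    ∑ j, ω (g (e j)) u * ω (f j) w = ω (g w) u := by
  conv_rhs => rw [← sum_omega_smul hdual w]
  simp [map_sum, mul_comm]

section Pairing

variable {ωh : B ⊗[k] B →ₗ[k] B ⊗[k] B →ₗ[k] k}
  (hωh : ∀ u₁ u₂ v₁ v₂ : B, ωh (u₁ ⊗ₜ[k] u₂) (v₁ ⊗ₜ[k] v₂) = ω u₁ v₁ * ω u₂ v₂)
include hωh

theorem ωh_rTensor_dualTensor (T : B →ₗ[k] B) (u v : B) :
    ωh (T.rTensor B (dualTensor e f)) (u ⊗ₜ v) = ω (T v) u := by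
  simp only [dualTensor, map_sum, LinearMap.rTensor_tmul, LinearMap.sum_apply, hωh]
  exact sum_omega_mul_omega hdual T u v

theorem ωh_lTensor_dualTensor {Q T : B →ₗ[k] B} (hQT : ∀ x y, ω (Q x) y = ω x (T y)) (u v : B) :
    ωh (Q.lTensor B (dualTensor e f)) (u ⊗ₜ v) = ω (T v) u := by
  simp only [dualTensor, map_sum, LinearMap.lTensor_tmul, LinearMap.sum_apply, hωh, hQT]
  exact sum_omega_mul_omega hdual LinearMap.id u (T v)

theorem ωh_comm_dualTensor (u v : B) :
    ωh (TensorProduct.comm k B B (dualTensor e f)) (u ⊗ₜ v) = ω u v := by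
  simp only [dualTensor, map_sum, comm_tmul, LinearMap.sum_apply, hωh]
  simpa [mul_comm] using sum_omega_mul_omega hdual LinearMap.id v u

variable (hω₁ : ∀ b₁ b₂ : B, ω b₁ b₂ = - ω b₂ b₁)
include hω₁

theorem eq_sum_ωh_smul (z : B ⊗[k] B) :
    z = ∑ s, ∑ t, ωh z (f s ⊗ₜ f t) • (e s ⊗ₜ[k] e t) := by
  induction z using TensorProduct.induction_on with
  | zero => simp
  | tmul x y =>
    conv_lhs => rw [← sum_omega_smul hdual x, ← sum_omega_smul hdual y]
    simp only [hωh, hω₁ x, hω₁ y, neg_mul_neg, sum_tmul, tmul_sum, smul_tmul_smul]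
    exact Finset.sum_comm
  | add z z' hz hz' =>
    conv_lhs => rw [hz, hz']
    simp only [map_add, LinearMap.add_apply, add_smul, Finset.sum_add_distrib]

theorem ext_ωh {z z' : B ⊗[k] B} (h : ∀ u v, ωh z (u ⊗ₜ v) = ωh z' (u ⊗ₜ v)) : z = z' := by
  rw [eq_sum_ωh_smul hdual hωh hω₁ z, eq_sum_ωh_smul hdual hωh hω₁ z']
  simp only [h]

end Pairing

variable (hω₁ : ∀ b₁ b₂ : B, ω b₁ b₂ = - ω b₂ b₁)
include hω₁

theorem rTensor_dualTensor_eq_lTensor {Q T : B →ₗ[k] B} (hQT : ∀ x y, ω (Q x) y = ω x (T y)) :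
    T.rTensor B (dualTensor e f) = Q.lTensor B (dualTensor e f) :=
  ext_ωh hdual tmul_omega_tmul hω₁ fun u v => by
    rw [ωh_rTensor_dualTensor hdual tmul_omega_tmul,
      ωh_lTensor_dualTensor hdual tmul_omega_tmul hQT]

theorem comm_dualTensor : TensorProduct.comm k B B (dualTensor e f) = - dualTensor e f :=
  ext_ωh hdual tmul_omega_tmul hω₁ fun u v => by
    have h := ωh_rTensor_dualTensor hdual tmul_omega_tmul LinearMap.id u v
    rw [LinearMap.rTensor_id, LinearMap.id_apply] at h
    rw [ωh_comm_dualTensor hdual tmul_omega_tmul, map_neg, LinearMap.neg_apply, h, hω₁,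
      LinearMap.id_apply]

end DualBasis

section QuadraticPerm

variable {k B : Type} [Field k] [AddCommGroup B] [Module k B]
  {dia : B →ₗ[k] B →ₗ[k] B} {ω : B →ₗ[k] B →ₗ[k] k}
  (hω₁ : ∀ b₁ b₂ : B, ω b₁ b₂ = - ω b₂ b₁)
  (hω₃ : ∀ b₁ b₂ b₃ : B, ω (dia b₁ b₂) b₃ = ω b₁ (dia b₂ b₃ - dia b₃ b₂))
include hω₁ hω₃

theorem omega_dia_left (b x y : B) : ω (dia b x) y = ω x (dia b y) := by
  rw [hω₃, hω₁ x, hω₃, map_sub, map_sub]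
  ring

theorem omega_dia_sub_dia (b x y : B) : ω (dia b x - dia x b) y = ω x (dia y b) := by
  rw [map_sub, LinearMap.sub_apply, omega_dia_left hω₁ hω₃, hω₃, map_sub]
  ring

variable {n : ℕ} {e : Module.Basis (Fin n) k B} {f : Fin n → B}
  (hdual : ∀ i j : Fin n, ω (f i) (e j) = if i = j then 1 else 0)
include hdual

theorem rTensor_dia_dualTensor (b : B) :
    (dia b).rTensor B (dualTensor e f) = (dia b).lTensor B (dualTensor e f) :=
  rTensor_dualTensor_eq_lTensor hdual hω₁ (omega_dia_left hω₁ hω₃ b)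

theorem rTensor_dia_flip_dualTensor (b : B) :
    (dia.flip b).rTensor B (dualTensor e f)
      = (dia b).lTensor B (dualTensor e f) - (dia.flip b).lTensor B (dualTensor e f) := by
  rw [rTensor_dualTensor_eq_lTensor hdual hω₁ (Q := dia b - dia.flip b)
    fun u v => by simpa using omega_dia_sub_dia hω₁ hω₃ b u v]
  rw [LinearMap.lTensor_sub, LinearMap.sub_apply]

variable {ωh : B ⊗[k] B →ₗ[k] B ⊗[k] B →ₗ[k] k}
  (hωh : ∀ u₁ u₂ v₁ v₂ : B, ωh (u₁ ⊗ₜ[k] u₂) (v₁ ⊗ₜ[k] v₂) = ω u₁ v₁ * ω u₂ v₂)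
  {ν : B →ₗ[k] B ⊗[k] B}
  (hν : ∀ b₁ b₂ b₃ : B, ωh (ν b₁) (b₂ ⊗ₜ[k] b₃) = - ω b₁ (dia b₂ b₃))
include hωh hν

theorem nu_eq_lTensor_dualTensor (b : B) : ν b = (dia.flip b).lTensor B (dualTensor e f) :=
  ext_ωh hdual hωh hω₁ fun u v => by
    have hadj : ∀ x y, ω (dia.flip b x) y = ω x ((dia b - dia.flip b) y) := fun x y => by
      simp [hω₃]
    rw [hν, ωh_lTensor_dualTensor hdual hωh hadj, hω₁ b, neg_neg, hω₃, hω₁ u]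
    simp only [map_sub, LinearMap.sub_apply, LinearMap.flip_apply]
    ring

theorem tau_nu (b : B) :
    tau k B (ν b)
      = (dia.flip b).lTensor B (dualTensor e f) - (dia b).lTensor B (dualTensor e f) := by
  rw [nu_eq_lTensor_dualTensor hω₁ hω₃ hdual hωh hν, tau, LinearEquiv.coe_coe,
    ← LinearMap.rTensor_comm, comm_dualTensor hdual hω₁, map_neg,
    rTensor_dia_flip_dualTensor hω₁ hω₃ hdual, neg_sub]

end QuadraticPerm

section SymmetricTensor

variable {k A : Type} [Field k] [AddCommGroup A] [Module k A] {r : A ⊗[k] A}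
  (hsym : TensorProduct.comm k A A r = r)
include hsym

theorem tau_lTensor_of_symm (g : A →ₗ[k] A) : tau k A (g.lTensor A r) = g.rTensor A r := by
  rw [tau, LinearEquiv.coe_coe, ← LinearMap.rTensor_comm, hsym]

theorem tau_rTensor_of_symm (g : A →ₗ[k] A) : tau k A (g.rTensor A r) = g.lTensor A r := by
  rw [tau, LinearEquiv.coe_coe, ← LinearMap.lTensor_comm, hsym]

end SymmetricTensor

section Interchange

variable {k A B : Type} [Field k] [AddCommGroup A] [Module k A] [AddCommGroup B] [Module k B]

theorem lTensor_map_intch (f : A →ₗ[k] A) (g : B →ₗ[k] B) (z : (A ⊗[k] A) ⊗[k] (B ⊗[k] B)) :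
    (map f g).lTensor (A ⊗[k] B) (intch k A B z)
      = intch k A B (map (f.lTensor A) (g.lTensor B) z) :=
  LinearMap.congr_fun (f := (map f g).lTensor (A ⊗[k] B) ∘ₗ intch k A B)
    (g := intch k A B ∘ₗ map (f.lTensor A) (g.lTensor B)) (ext_fourfold' fun _ _ _ _ => rfl) z

theorem rTensor_map_intch (f : A →ₗ[k] A) (g : B →ₗ[k] B) (z : (A ⊗[k] A) ⊗[k] (B ⊗[k] B)) :
    (map f g).rTensor (A ⊗[k] B) (intch k A B z)
      = intch k A B (map (f.rTensor A) (g.rTensor B) z) :=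
  LinearMap.congr_fun (f := (map f g).rTensor (A ⊗[k] B) ∘ₗ intch k A B)
    (g := intch k A B ∘ₗ map (f.rTensor A) (g.rTensor B)) (ext_fourfold' fun _ _ _ _ => rfl) z

theorem tau_intch (z : (A ⊗[k] A) ⊗[k] (B ⊗[k] B)) :
    tau k (A ⊗[k] B) (intch k A B z) = intch k A B (map (tau k A) (tau k B) z) :=
  LinearMap.congr_fun (f := tau k (A ⊗[k] B) ∘ₗ intch k A B)
    (g := intch k A B ∘ₗ map (tau k A) (tau k B)) (ext_fourfold' fun _ _ _ _ => rfl) z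

end Interchange

theorem statement9_general (k A B : Type) [Field k]
    [AddCommGroup A] [Module k A]
    [AddCommGroup B] [Module k B]
    (ast : A →ₗ[k] A →ₗ[k] A)
    (r : A ⊗[k] A) (p : ℕ) (x y : Fin p → A)
    (hr : r = ∑ i : Fin p, (x i) ⊗ₜ[k] (y i))
    (hsym : (TensorProduct.comm k A A) r = r)
    (ϑr : A →ₗ[k] A ⊗[k] A)
    (hϑr : ∀ a : A,
      ϑr a = TensorProduct.map (idm k A) (ast a + ast.flip a) r
        - TensorProduct.map (ast a) (idm k A) r)
    (dia : B →ₗ[k] B →ₗ[k] B)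
    (ω : B →ₗ[k] B →ₗ[k] k)
    (hω₁ : ∀ b₁ b₂ : B, ω b₁ b₂ = - ω b₂ b₁)
    (hω₃ : ∀ b₁ b₂ b₃ : B, ω (dia b₁ b₂) b₃ = ω b₁ (dia b₂ b₃ - dia b₃ b₂))
    (n : ℕ) (e : Module.Basis (Fin n) k B) (f : Fin n → B)
    (hdual : ∀ i j : Fin n, ω (f i) (e j) = if i = j then 1 else 0)
    (ωh : B ⊗[k] B →ₗ[k] B ⊗[k] B →ₗ[k] k)
    (hωh : ∀ u₁ u₂ v₁ v₂ : B, ωh (u₁ ⊗ₜ[k] u₂) (v₁ ⊗ₜ[k] v₂) = ω u₁ v₁ * ω u₂ v₂)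
    (ν : B →ₗ[k] B ⊗[k] B)
    (hν : ∀ b₁ b₂ b₃ : B, ωh (ν b₁) (b₂ ⊗ₜ[k] b₃) = - ω b₁ (dia b₂ b₃))
    (m : A ⊗[k] B →ₗ[k] A ⊗[k] B →ₗ[k] A ⊗[k] B)
    (hm : ∀ (a₁ a₂ : A) (b₁ b₂ : B),
      m (a₁ ⊗ₜ[k] b₁) (a₂ ⊗ₜ[k] b₂)
        = (ast a₁ a₂) ⊗ₜ[k] (dia b₁ b₂) + (ast a₂ a₁) ⊗ₜ[k] (dia b₂ b₁))
    (Δ : A ⊗[k] B →ₗ[k] (A ⊗[k] B) ⊗[k] (A ⊗[k] B))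
    (hΔ : ∀ (a : A) (b : B),
      Δ (a ⊗ₜ[k] b)
        = intch k A (B) ((ϑr a) ⊗ₜ[k] (ν b))
          + tau k (A ⊗[k] B) (intch k A (B) ((ϑr a) ⊗ₜ[k] (ν b))))
    (rhat : (A ⊗[k] B) ⊗[k] (A ⊗[k] B))
    (hrhat : rhat = ∑ i : Fin p, ∑ j : Fin n,
      ((x i) ⊗ₜ[k] (e j : B)) ⊗ₜ[k] ((y i) ⊗ₜ[k] (f j)))
    :
    ∀ (a : A) (b : B),
      Δ (a ⊗ₜ[k] b)
        = TensorProduct.map (idm k (A ⊗[k] B)) (m (a ⊗ₜ[k] b)) rhat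
          - TensorProduct.map (m (a ⊗ₜ[k] b)) (idm k (A ⊗[k] B)) rhat := by
  intro a b
  set c := dualTensor e f
  have hrhat' : rhat = intch k A B (r ⊗ₜ c) := by
    simp only [hrhat, hr, c, dualTensor, sum_tmul, tmul_sum, map_sum, intch, LinearEquiv.coe_coe,
      tensorTensorTensorComm_tmul]
    exact Finset.sum_comm
  have hm' : m (a ⊗ₜ b) = map (ast a) (dia b) + map (ast.flip a) (dia.flip b) :=
    TensorProduct.ext' fun a' b' => by simp [hm]
  have hϑ : ϑr a = (ast a).lTensor A r + (ast.flip a).lTensor A r - (ast a).rTensor A r := by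
    rw [hϑr, idm, ← LinearMap.lTensor_def, ← LinearMap.rTensor_def, LinearMap.lTensor_add,
      LinearMap.add_apply]
  have hτϑ : tau k A (ϑr a)
      = (ast a).rTensor A r + (ast.flip a).rTensor A r - (ast a).lTensor A r := by
    simp only [hϑ, map_sub, map_add, tau_lTensor_of_symm hsym, tau_rTensor_of_symm hsym]
  rw [hΔ, tau_intch, map_tmul, hτϑ, tau_nu hω₁ hω₃ hdual hωh hν, hϑ,
    nu_eq_lTensor_dualTensor hω₁ hω₃ hdual hωh hν, hrhat', hm', idm, ← LinearMap.lTensor_def,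
    ← LinearMap.rTensor_def, LinearMap.lTensor_add, LinearMap.rTensor_add, LinearMap.add_apply,
    LinearMap.add_apply, lTensor_map_intch, lTensor_map_intch, rTensor_map_intch,
    rTensor_map_intch, map_tmul, map_tmul, map_tmul, map_tmul, rTensor_dia_dualTensor hω₁ hω₃ hdual,
    rTensor_dia_flip_dualTensor hω₁ hω₃ hdual]
  simp only [← map_add, ← map_sub]
  congr 1
  simp only [add_tmul, sub_tmul, tmul_sub]
  abel

theorem statement9 (k A B : Type) [Field k] [CharZero k]
    [AddCommGroup A] [Module k A] [FiniteDimensional k A]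
    [AddCommGroup B] [Module k B] [FiniteDimensional k B]
    (ast : A →ₗ[k] A →ₗ[k] A) (hast : IsZinbiel ast)
    (r : A ⊗[k] A) (p : ℕ) (x y : Fin p → A)
    (hr : r = ∑ i : Fin p, (x i) ⊗ₜ[k] (y i))
    (hsym : (TensorProduct.comm k A A) r = r)
    (hZ : Zexp ast x y = 0)
    (ϑr : A →ₗ[k] A ⊗[k] A)
    (hϑr : ∀ a : A,
      ϑr a = TensorProduct.map (idm k A) (ast a + ast.flip a) r
        - TensorProduct.map (ast a) (idm k A) r)
    (dia : B →ₗ[k] B →ₗ[k] B) (hdia : IsPerm dia)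
    (ω : B →ₗ[k] B →ₗ[k] k)
    (hω₁ : ∀ b₁ b₂ : B, ω b₁ b₂ = - ω b₂ b₁)
    (hω₂ : ∀ b₁ : B, (∀ b₂ : B, ω b₁ b₂ = 0) → b₁ = 0)
    (hω₃ : ∀ b₁ b₂ b₃ : B, ω (dia b₁ b₂) b₃ = ω b₁ (dia b₂ b₃ - dia b₃ b₂))
    (n : ℕ) (e : Module.Basis (Fin n) k B) (f : Fin n → B)
    (hdual : ∀ i j : Fin n, ω (f i) (e j) = if i = j then 1 else 0)
    (ωh : B ⊗[k] B →ₗ[k] B ⊗[k] B →ₗ[k] k)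
    (hωh : ∀ u₁ u₂ v₁ v₂ : B, ωh (u₁ ⊗ₜ[k] u₂) (v₁ ⊗ₜ[k] v₂) = ω u₁ v₁ * ω u₂ v₂)
    (ν : B →ₗ[k] B ⊗[k] B)
    (hν : ∀ b₁ b₂ b₃ : B, ωh (ν b₁) (b₂ ⊗ₜ[k] b₃) = - ω b₁ (dia b₂ b₃))
    (m : A ⊗[k] B →ₗ[k] A ⊗[k] B →ₗ[k] A ⊗[k] B)
    (hm : ∀ (a₁ a₂ : A) (b₁ b₂ : B),
      m (a₁ ⊗ₜ[k] b₁) (a₂ ⊗ₜ[k] b₂)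
        = (ast a₁ a₂) ⊗ₜ[k] (dia b₁ b₂) + (ast a₂ a₁) ⊗ₜ[k] (dia b₂ b₁))
    (Δ : A ⊗[k] B →ₗ[k] (A ⊗[k] B) ⊗[k] (A ⊗[k] B))
    (hΔ : ∀ (a : A) (b : B),
      Δ (a ⊗ₜ[k] b)
        = intch k A (B) ((ϑr a) ⊗ₜ[k] (ν b))
          + tau k (A ⊗[k] B) (intch k A (B) ((ϑr a) ⊗ₜ[k] (ν b))))
    (rhat : (A ⊗[k] B) ⊗[k] (A ⊗[k] B))
    (hrhat : rhat = ∑ i : Fin p, ∑ j : Fin n,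
      ((x i) ⊗ₜ[k] (e j : B)) ⊗ₜ[k] ((y i) ⊗ₜ[k] (f j)))
    :
    ∀ (a : A) (b : B),
      Δ (a ⊗ₜ[k] b)
        = TensorProduct.map (idm k (A ⊗[k] B)) (m (a ⊗ₜ[k] b)) rhat
          - TensorProduct.map (m (a ⊗ₜ[k] b)) (idm k (A ⊗[k] B)) rhat :=
  statement9_general k A B ast r p x y hr hsym ϑr hϑr dia ω hω₁ hω₃ n e f hdual ωh hωh ν hν m hm Δ
    hΔ rhat hrhat
end
end
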